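/- arXiv:cs/0205041 — 4 statements merged into one kernel-verified Lean document; each statement's English description precedes it below -/
import Mathlib

section
/- If a nondegenerate pivot path p for shortest path tree T contains a cycle, then that cycle has zero cost at the pivot point λ', contains at least one parameterized edge, and hence has strictly negative cost in G_λ for every λ > λ'; consequently λ* = λ'. -/
variable {V : Type*}

/-- `IsWalkFrom E s t p` : `p` is a list of edges forming a walk from `s` to `t`
in the directed graph with edge relation `E`. -/
def IsWalkFrom (E : V → V → Prop) : V → V → List (V × V) → Prop
  | s, t, [] => s = t
  | s, t, e :: p => E e.1 e.2 ∧ e.1 = s ∧ IsWalkFrom E e.2 t p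

/-- Total cost of a walk. -/
def walkCost (c : V × V → ℝ) (p : List (V × V)) : ℝ := (p.map c).sum

/-- The graph has a negative-cost (directed) cycle. -/
def HasNegCycle (E : V → V → Prop) (c : V × V → ℝ) : Prop :=
  ∃ v p, p ≠ [] ∧ IsWalkFrom E v v p ∧ walkCost c p < 0

/-- `v` is reachable from `s`. -/
def Reaches (E : V → V → Prop) (s v : V) : Prop := ∃ p, IsWalkFrom E s v p

/-- Edge costs of `G_lam`: the parameter `lam` is subtracted from the cost of each
parameterized edge (edges in `E'`). -/
def paramCost (c : V × V → ℝ) (E' : V × V → Prop) [DecidablePred E'] (lam : ℝ) :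
    V × V → ℝ :=
  fun e => c e - lam * (if E' e then 1 else 0)

/-- Number of parameterized edges on a walk. -/
def paramCount (E' : V × V → Prop) [DecidablePred E'] (p : List (V × V)) : ℕ :=
  p.countP fun e => decide (E' e)

/-- `t` is a shortest path tree from `s`: it assigns to each vertex a walk from `s`
of minimum cost. -/
def IsSPTree (E : V → V → Prop) (c : V × V → ℝ) (s : V) (t : V → List (V × V)) : Prop :=
  ∀ v, IsWalkFrom E s v (t v) ∧ ∀ q, IsWalkFrom E s v q → walkCost c (t v) ≤ walkCost c q

/-- `p` is a pivot path for tree `t` at parameter value `lam'`: a shortest path in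
`G_lam'` from `s` to `v` with more parameterized edges than the tree path `t v`. -/
def IsPivotPath (E : V → V → Prop) (c : V × V → ℝ) (E' : V × V → Prop)
    [DecidablePred E'] (s : V) (t : V → List (V × V)) (lam' : ℝ)
    (v : V) (p : List (V × V)) : Prop :=
  IsWalkFrom E s v p ∧
  (∀ q, IsWalkFrom E s v q →
    walkCost (paramCost c E' lam') p ≤ walkCost (paramCost c E' lam') q) ∧
  paramCount E' (t v) < paramCount E' p

/-- `p` is nondegenerate: no proper prefix of `p` has fewer parameterized edges than
the corresponding tree path, and `p` contains no zero-cost cycle without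
parameterized edges. -/
def NondegeneratePath (E : V → V → Prop) (c : V × V → ℝ) (E' : V × V → Prop)
    [DecidablePred E'] (s : V) (t : V → List (V × V)) (lam' : ℝ)
    (p : List (V × V)) : Prop :=
  (∀ p₁ p₂ u, p = p₁ ++ p₂ → p₂ ≠ [] → IsWalkFrom E s u p₁ →
    paramCount E' (t u) ≤ paramCount E' p₁) ∧
  (∀ p₁ K p₂ u, p = p₁ ++ K ++ p₂ → K ≠ [] → IsWalkFrom E u u K →
    ¬ (walkCost (paramCost c E' lam') K = 0 ∧ paramCount E' K = 0))

/-!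
A cycle `K` on a shortest walk of `G_lam'` costs zero: cutting it out cannot make the walk
cheaper, and going around it `n` times cannot either, for any `n`. Nondegeneracy then puts a
parameterized edge on `K`, so its cost `c(K) - μ·δ(K)` is negative for every `μ > lam'`. For
`μ ≤ lam'` every cycle costs at least as much as in `G_lam'`, where the shortest path tree
excludes negative cycles. So the `μ` without negative cycles form exactly `(-∞, lam']`.
-/

section Walks

variable {E : V → V → Prop}

theorem isWalkFrom_append {p q : List (V × V)} :
    ∀ {s t : V}, IsWalkFrom E s t (p ++ q) ↔ ∃ m, IsWalkFrom E s m p ∧ IsWalkFrom E m t q := by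
  induction p with
  | nil => exact fun {s t} => ⟨fun h => ⟨s, rfl, h⟩, fun ⟨_, hs, h⟩ => hs ▸ h⟩
  | cons e p ih =>
    intro s t
    constructor
    · rintro ⟨he, rfl, h⟩
      obtain ⟨m, h₁, h₂⟩ := ih.mp h
      exact ⟨m, ⟨he, rfl, h₁⟩, h₂⟩
    · rintro ⟨m, ⟨he, rfl, h₁⟩, h₂⟩
      exact ⟨he, rfl, ih.mpr ⟨m, h₁, h₂⟩⟩

theorem IsWalkFrom.append {s m t : V} {p q : List (V × V)} (hp : IsWalkFrom E s m p)
    (hq : IsWalkFrom E m t q) : IsWalkFrom E s t (p ++ q) :=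
  isWalkFrom_append.mpr ⟨m, hp, hq⟩

theorem IsWalkFrom.source_eq {s t s' t' : V} {p : List (V × V)} (hp : p ≠ [])
    (h : IsWalkFrom E s t p) (h' : IsWalkFrom E s' t' p) : s = s' := by
  obtain ⟨e, p, rfl⟩ := List.exists_cons_of_ne_nil hp
  exact h.2.1.symm.trans h'.2.1

theorem IsWalkFrom.target_eq {p : List (V × V)} :
    ∀ {s t t' : V}, IsWalkFrom E s t p → IsWalkFrom E s t' p → t = t' := by
  induction p with
  | nil => exact fun h h' => h.symm.trans h'
  | cons e p ih => exact fun h h' => ih h.2.2 h'.2.2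

theorem IsWalkFrom.of_append_cycle {s u v : V} {p₁ K p₂ : List (V × V)}
    (hp : IsWalkFrom E s v (p₁ ++ K ++ p₂)) (hK : K ≠ []) (hKcyc : IsWalkFrom E u u K) :
    IsWalkFrom E s u p₁ ∧ IsWalkFrom E u v p₂ := by
  obtain ⟨m, hp₁, hKp₂⟩ := isWalkFrom_append.mp (List.append_assoc p₁ K p₂ ▸ hp)
  obtain ⟨m', hKm, hp₂⟩ := isWalkFrom_append.mp hKp₂
  obtain rfl : m = u := hKm.source_eq hK hKcyc
  obtain rfl : m' = m := hKm.target_eq hKcyc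
  exact ⟨hp₁, hp₂⟩

theorem IsWalkFrom.flatten_replicate {u : V} {K : List (V × V)} (hK : IsWalkFrom E u u K) :
    ∀ n, IsWalkFrom E u u (List.replicate n K).flatten
  | 0 => rfl
  | n + 1 => by
    rw [List.replicate_succ, List.flatten_cons]
    exact hK.append (hK.flatten_replicate n)

end Walks

theorem walkCost_append (c : V × V → ℝ) (p q : List (V × V)) :
    walkCost c (p ++ q) = walkCost c p + walkCost c q := by
  simp [walkCost]

theorem walkCost_flatten_replicate (c : V × V → ℝ) (K : List (V × V)) (n : ℕ) :
    walkCost c (List.replicate n K).flatten = n * walkCost c K := by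
  simp [walkCost, List.sum_flatten, List.map_flatten]

theorem walkCost_paramCost (c : V × V → ℝ) (E' : V × V → Prop) [DecidablePred E']
    (lam μ : ℝ) (q : List (V × V)) :
    walkCost (paramCost c E' μ) q
      = walkCost (paramCost c E' lam) q - (μ - lam) * paramCount E' q := by
  induction q with
  | nil => simp [walkCost, paramCount]
  | cons e q ih =>
    simp only [walkCost, List.map_cons, List.sum_cons, paramCount, List.countP_cons] at *
    by_cases h : E' e <;> simp [paramCost, h, ih] <;> ring

theorem walkCost_paramCost_le (c : V × V → ℝ) (E' : V × V → Prop) [DecidablePred E']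
    {lam μ : ℝ} (h : lam ≤ μ) (q : List (V × V)) :
    walkCost (paramCost c E' μ) q ≤ walkCost (paramCost c E' lam) q := by
  rw [walkCost_paramCost c E' lam μ]
  have := mul_nonneg (sub_nonneg.mpr h) (Nat.cast_nonneg (α := ℝ) (paramCount E' q))
  linarith

section ShortestWalks

variable {E : V → V → Prop} {c : V × V → ℝ}

theorem walkCost_cycle_nonneg {s u v : V} {a K b : List (V × V)} {C : ℝ}
    (ha : IsWalkFrom E s u a) (hK : IsWalkFrom E u u K) (hb : IsWalkFrom E u v b)
    (hbdd : ∀ q, IsWalkFrom E s v q → C ≤ walkCost c q) : 0 ≤ walkCost c K := by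
  by_contra! hneg
  obtain ⟨n, hn⟩ := exists_nat_gt ((walkCost c a + walkCost c b - C) / -walkCost c K)
  rw [div_lt_iff₀ (neg_pos.mpr hneg)] at hn
  have hpump := hbdd _ (ha.append ((hK.flatten_replicate n).append hb))
  rw [walkCost_append, walkCost_append, walkCost_flatten_replicate] at hpump
  linarith

theorem walkCost_cycle_eq_zero_of_shortest {s u v : V} {p₁ K p₂ : List (V × V)}
    (hp : IsWalkFrom E s v (p₁ ++ K ++ p₂))
    (hmin : ∀ q, IsWalkFrom E s v q → walkCost c (p₁ ++ K ++ p₂) ≤ walkCost c q)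
    (hK : K ≠ []) (hKcyc : IsWalkFrom E u u K) : walkCost c K = 0 := by
  obtain ⟨hp₁, hp₂⟩ := hp.of_append_cycle hK hKcyc
  have hremove := hmin _ (hp₁.append hp₂)
  simp only [walkCost_append] at hremove
  linarith [walkCost_cycle_nonneg hp₁ hKcyc hp₂ hmin]

theorem IsSPTree.not_hasNegCycle {s : V} {t : V → List (V × V)} (hT : IsSPTree E c s t) :
    ¬ HasNegCycle E c := by
  rintro ⟨w, C, -, hC, hCneg⟩
  have := (hT w).2 _ ((hT w).1.append hC)
  rw [walkCost_append] at this
  linarith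

end ShortestWalks

theorem HasNegCycle.paramCost_mono {E : V → V → Prop} {c : V × V → ℝ} {E' : V × V → Prop}
    [DecidablePred E'] {lam μ : ℝ} (h : HasNegCycle E (paramCost c E' lam)) (hle : lam ≤ μ) :
    HasNegCycle E (paramCost c E' μ) :=
  let ⟨w, C, hC, hCw, hCneg⟩ := h
  ⟨w, C, hC, hCw, (walkCost_paramCost_le c E' hle C).trans_lt hCneg⟩

theorem stmt7_general (E : V → V → Prop) (c : V × V → ℝ) (E' : V × V → Prop)
    [DecidablePred E'] (s : V) (t : V → List (V × V)) (lam' : ℝ) (v : V)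
    (p : List (V × V))
    (hT : IsSPTree E (paramCost c E' lam') s t)
    (hpiv : IsPivotPath E c E' s t lam' v p)
    (hnd : NondegeneratePath E c E' s t lam' p)
    (p₁ K p₂ : List (V × V)) (u : V)
    (hdecomp : p = p₁ ++ K ++ p₂) (hK : K ≠ []) (hKcyc : IsWalkFrom E u u K) :
    walkCost (paramCost c E' lam') K = 0 ∧
    1 ≤ paramCount E' K ∧
    (∀ μ > lam', walkCost (paramCost c E' μ) K < 0) ∧
    sSup {μ | ¬ HasNegCycle E (paramCost c E' μ)} = lam' := by
  obtain ⟨hpw, hpmin, -⟩ := hpiv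
  subst hdecomp
  have hzero := walkCost_cycle_eq_zero_of_shortest hpw hpmin hK hKcyc
  have hcount : 1 ≤ paramCount E' K :=
    Nat.one_le_iff_ne_zero.mpr fun h => hnd.2 p₁ K p₂ u rfl hK hKcyc ⟨hzero, h⟩
  have hneg : ∀ μ > lam', walkCost (paramCost c E' μ) K < 0 := by
    intro μ hμ
    rw [walkCost_paramCost c E' lam' μ K, hzero]
    have : (1 : ℝ) ≤ paramCount E' K := by exact_mod_cast hcount
    nlinarith
  have hset : {μ | ¬ HasNegCycle E (paramCost c E' μ)} = Set.Iic lam' := by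
    ext μ
    refine ⟨fun h => not_lt.mp fun hlt => h ⟨u, K, hK, hKcyc, hneg μ hlt⟩, fun hle hμ => ?_⟩
    exact hT.not_hasNegCycle (hμ.paramCost_mono hle)
  exact ⟨hzero, hcount, hneg, hset ▸ csSup_Iic⟩

/-- If a nondegenerate pivot path `p` for shortest path tree `t` at
pivot point `lam'` contains a cycle `K`, then `K` has zero cost in `G_lam'`,
contains at least one parameterized edge, has strictly negative cost in `G_μ` for
every `μ > lam'`, and hence `lam* = lam'`, where `lam*` is the supremum of `μ` for
which `G_μ` has no negative-cost cycle. -/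
theorem stmt7 [Fintype V] (E : V → V → Prop) (c : V × V → ℝ) (E' : V × V → Prop)
    [DecidablePred E'] (s : V) (t : V → List (V × V)) (lam' : ℝ) (v : V)
    (p : List (V × V))
    (hT : IsSPTree E (paramCost c E' lam') s t)
    (hpiv : IsPivotPath E c E' s t lam' v p)
    (hnd : NondegeneratePath E c E' s t lam' p)
    (p₁ K p₂ : List (V × V)) (u : V)
    (hdecomp : p = p₁ ++ K ++ p₂) (hK : K ≠ []) (hKcyc : IsWalkFrom E u u K) :
    walkCost (paramCost c E' lam') K = 0 ∧
    1 ≤ paramCount E' K ∧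
    (∀ μ > lam', walkCost (paramCost c E' μ) K < 0) ∧
    sSup {μ | ¬ HasNegCycle E (paramCost c E' μ)} = lam' :=
  stmt7_general E c E' s t lam' v p hT hpiv hnd p₁ K p₂ u hdecomp hK hKcyc
end

section
/- Let G be strongly connected, let C be a cycle in G^π all of whose edges have minimum cost λ* (with all other edge costs ≥ λ*), let H = G^π/C be the contraction of C to a single vertex v, and let β minimum-balance H. Then the potential α on G^π defined by α(w) = β(v) if w ∈ C and α(w) = β(w) otherwise, minimum-balances G^π; hence π + α minimum-balances G. -/
/-- A directed multigraph on vertex set `V` with real edge costs: edges are indexed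
by a type `ι`, with source, target and cost maps. -/
structure MGraph (V : Type) where
  ι : Type
  src : ι → V
  tgt : ι → V
  cost : ι → ℝ

namespace MGraph

variable {V : Type}

/-- `G.IsWalk s t p` : `p` is a list of edges forming a walk from `s` to `t`. -/
def IsWalk (G : MGraph V) : V → V → List G.ι → Prop
  | s, t, [] => s = t
  | s, t, e :: p => G.src e = s ∧ G.IsWalk (G.tgt e) t p

/-- Total cost of a walk. -/
def wcost (G : MGraph V) (p : List G.ι) : ℝ := (p.map G.cost).sum

/-- The reweighting `G^π` of `G` under a potential `π`. -/
def reweight (G : MGraph V) (π : V → ℝ) : MGraph V :=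
  ⟨G.ι, G.src, G.tgt, fun e => G.cost e + π (G.src e) - π (G.tgt e)⟩

/-- Contraction of `G` along a quotient map `q : V → V`: self-loops are deleted,
parallel edges are kept. -/
def contract (G : MGraph V) (q : V → V) : MGraph V :=
  ⟨{e : G.ι // q (G.src e) ≠ q (G.tgt e)}, fun e => q (G.src e.1),
    fun e => q (G.tgt e.1), fun e => G.cost e.1⟩

/-- `G` is strongly connected. -/
def StronglyConnected (G : MGraph V) : Prop := ∀ u v, ∃ p, G.IsWalk u v p

/-- The potential `μ` minimum-balances `G`: in `G^μ`, for every proper nonempty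
vertex subset `S`, the minimum cost among edges entering `S` equals the minimum cost
among edges leaving `S`. -/
def MinBalances (G : MGraph V) (μ : V → ℝ) : Prop :=
  ∀ S : Set V, S.Nonempty → S ≠ Set.univ →
    sInf {x | ∃ e, G.src e ∉ S ∧ G.tgt e ∈ S ∧
        x = G.cost e + μ (G.src e) - μ (G.tgt e)} =
      sInf {x | ∃ e, G.src e ∈ S ∧ G.tgt e ∉ S ∧
        x = G.cost e + μ (G.src e) - μ (G.tgt e)}

end MGraph

/-!
The heart of the matter is that the reduced costs of `H^β` are still `≥ λ*`. The costs of `H`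
are `≥ λ*`, so `β` itself is a feasible potential: every reduced cost is at least
`λ* + β(src) - β(tgt)`. Hence an edge of reduced cost `< λ*` climbs in `β`, enters the level
set `{β > r}` for suitable `r`, while all edges leaving that level set have reduced cost `> λ*`,
contradicting balance. With infinitely many edges the infimum over the entering edges may be
the junk value `0` of an unbounded set; one repairs this by moving the two endpoints of a cheap
crossing edge across the cut (which makes the entering costs bounded), so that any two cheap
crossing edges share an endpoint, and a vertex carrying arbitrarily cheap edges is ruled out by
a singleton cut.

Once `H^β` is known to have reduced costs `≥ λ*`, so does `G^{π+α}`. A cut that does not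
separate `C` is a cut of `H` with the same crossing edges; a cut separating `C` is entered and
left by edges of `C`, of reduced cost exactly `λ*`, so both minima equal `λ*`.
-/

namespace MGraph

variable {V : Type}

section Walks

variable {D : MGraph V}

theorem isWalk_reweight_iff {μ : V → ℝ} {p : List D.ι} :
    ∀ {s t : V}, (D.reweight μ).IsWalk s t p ↔ D.IsWalk s t p := by
  induction p with
  | nil => exact Iff.rfl
  | cons e p ih => exact and_congr Iff.rfl ih

theorem StronglyConnected.reweight (hsc : D.StronglyConnected) (μ : V → ℝ) :
    (D.reweight μ).StronglyConnected :=
  fun u v => (hsc u v).imp fun _ hp => isWalk_reweight_iff.2 hp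

theorem IsWalk.exists_enter {S : Set V} {p : List D.ι} :
    ∀ {s t : V}, D.IsWalk s t p → s ∉ S → t ∈ S → ∃ e ∈ p, D.src e ∉ S ∧ D.tgt e ∈ S := by
  induction p with
  | nil =>
    intro s t h hs ht
    exact absurd ((show s = t from h) ▸ ht) hs
  | cons e p ih =>
    intro s t h hs ht
    by_cases hm : D.tgt e ∈ S
    · exact ⟨e, List.mem_cons_self, h.1 ▸ hs, hm⟩
    · obtain ⟨f, hf, hf'⟩ := ih h.2 hm ht
      exact ⟨f, List.mem_cons_of_mem _ hf, hf'⟩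

theorem IsWalk.exists_leave {S : Set V} {p : List D.ι} {s t : V} (h : D.IsWalk s t p)
    (hs : s ∈ S) (ht : t ∉ S) : ∃ e ∈ p, D.src e ∈ S ∧ D.tgt e ∉ S := by
  simpa using h.exists_enter (S := Sᶜ) (by simpa using hs) ht

theorem IsWalk.split {p : List D.ι} {e : D.ι} :
    ∀ {s t : V}, D.IsWalk s t p → e ∈ p →
      ∃ p₁ p₂, p = p₁ ++ e :: p₂ ∧ D.IsWalk s (D.src e) p₁ ∧ D.IsWalk (D.tgt e) t p₂ := by
  induction p with
  | nil => intro s t _ he; cases he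
  | cons f p ih =>
    intro s t h he
    rcases List.mem_cons.1 he with rfl | hmem
    · exact ⟨[], p, rfl, h.1.symm, h.2⟩
    · obtain ⟨p₁, p₂, rfl, h₁, h₂⟩ := ih h.2 hmem
      exact ⟨f :: p₁, p₂, rfl, ⟨h.1, h₁⟩, h₂⟩

theorem IsWalk.exists_src_eq_tgt_of_closed {C : List D.ι} {u : V} {e : D.ι}
    (h : D.IsWalk u u C) (he : e ∈ C) : ∃ f ∈ C, D.src f = D.tgt e := by
  obtain ⟨p₁, p₂, hC, -, h₂⟩ := h.split he
  cases p₂ with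
  | nil =>
    obtain ⟨c, C', rfl⟩ := List.exists_cons_of_ne_nil (List.ne_nil_of_mem he)
    exact ⟨c, List.mem_cons_self, h.1.trans (show D.tgt e = u from h₂).symm⟩
  | cons f p₂ =>
    exact ⟨f, hC ▸ List.mem_append_right _ (List.mem_cons_of_mem _ List.mem_cons_self), h₂.1⟩

theorem IsWalk.exists_enter_and_leave_of_closed {C : List D.ι} {u : V} {e : D.ι}
    {S : Set V} (h : D.IsWalk u u C) (he : e ∈ C) (hS : ¬(D.src e ∈ S ↔ u ∈ S)) :
    (∃ f ∈ C, D.src f ∉ S ∧ D.tgt f ∈ S) ∧ (∃ f ∈ C, D.src f ∈ S ∧ D.tgt f ∉ S) := by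
  obtain ⟨p₁, p₂, hC, h₁, h₂⟩ := h.split he
  have h₂' : D.IsWalk (D.src e) u (e :: p₂) := ⟨rfl, h₂⟩
  have hsub₁ : p₁ ⊆ C := hC ▸ List.subset_append_left _ _
  have hsub₂ : e :: p₂ ⊆ C := hC ▸ List.subset_append_right _ _
  by_cases hu : u ∈ S
  · have hs : D.src e ∉ S := fun h' => hS ⟨fun _ => hu, fun _ => h'⟩
    obtain ⟨f, hf, hf'⟩ := h₂'.exists_enter hs hu
    obtain ⟨g, hg, hg'⟩ := h₁.exists_leave hu hs
    exact ⟨⟨f, hsub₂ hf, hf'⟩, ⟨g, hsub₁ hg, hg'⟩⟩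
  · have hs : D.src e ∈ S := by tauto
    obtain ⟨f, hf, hf'⟩ := h₁.exists_enter hu hs
    obtain ⟨g, hg, hg'⟩ := h₂'.exists_leave hs hu
    exact ⟨⟨f, hsub₁ hf, hf'⟩, ⟨g, hsub₂ hg, hg'⟩⟩

theorem IsWalk.contract (q : V → V) {p : List D.ι} :
    ∀ {a b : V}, D.IsWalk a b p → ∃ p', (D.contract q).IsWalk (q a) (q b) p' := by
  induction p with
  | nil =>
    intro a b h
    exact ⟨[], congrArg q h⟩
  | cons e p ih =>
    intro a b h
    obtain ⟨p', hp'⟩ := ih h.2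
    by_cases hq : q (D.src e) = q (D.tgt e)
    · exact ⟨p', h.1 ▸ hq ▸ hp'⟩
    · exact ⟨⟨e, hq⟩ :: p', congrArg q h.1, hp'⟩

end Walks

section Balance

variable {E : MGraph V} {S : Set V}

def inCosts (E : MGraph V) (S : Set V) : Set ℝ :=
  {x | ∃ e, E.src e ∉ S ∧ E.tgt e ∈ S ∧ x = E.cost e}

def outCosts (E : MGraph V) (S : Set V) : Set ℝ :=
  {x | ∃ e, E.src e ∈ S ∧ E.tgt e ∉ S ∧ x = E.cost e}

def IsBalanced (E : MGraph V) : Prop :=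
  ∀ S : Set V, S.Nonempty → S ≠ Set.univ → sInf (E.inCosts S) = sInf (E.outCosts S)

theorem minBalances_iff_isBalanced {D : MGraph V} {μ : V → ℝ} :
    D.MinBalances μ ↔ (D.reweight μ).IsBalanced := Iff.rfl

theorem minBalances_reweight_iff {D : MGraph V} {π μ : V → ℝ} :
    (D.reweight π).MinBalances μ ↔ D.MinBalances (fun w => π w + μ w) := by
  have h : (D.reweight π).reweight μ = D.reweight (fun w => π w + μ w) := by
    simp only [reweight, mk.injEq, heq_eq_eq, true_and]
    funext e
    ring
  rw [minBalances_iff_isBalanced, minBalances_iff_isBalanced, h]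

theorem outCosts_eq_inCosts_compl : E.outCosts S = E.inCosts Sᶜ := by
  ext; simp [inCosts, outCosts]

def reverse (E : MGraph V) : MGraph V := ⟨E.ι, E.tgt, E.src, E.cost⟩

theorem inCosts_reverse : E.reverse.inCosts S = E.outCosts S := by
  ext; simp only [inCosts, outCosts, reverse, Set.mem_ofPred_eq]; grind

theorem outCosts_reverse : E.reverse.outCosts S = E.inCosts S := by
  ext; simp only [inCosts, outCosts, reverse, Set.mem_ofPred_eq]; grind

theorem IsBalanced.reverse (h : E.IsBalanced) : E.reverse.IsBalanced := fun S hS hS' => by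
  rw [inCosts_reverse, outCosts_reverse]
  exact (h S hS hS').symm

theorem IsBalanced.le_of_mem_inCosts (h : E.IsBalanced) (hS : S.Nonempty) (hS' : S ≠ Set.univ)
    {a x : ℝ} (ha : a ≤ sInf (E.outCosts S)) (hbdd : BddBelow (E.inCosts S))
    (hx : x ∈ E.inCosts S) : a ≤ x :=
  (h S hS hS' ▸ ha).trans (csInf_le hbdd hx)

theorem IsBalanced.le_of_mem_outCosts (h : E.IsBalanced) (hS : S.Nonempty) (hS' : S ≠ Set.univ)
    {a x : ℝ} (ha : a ≤ sInf (E.inCosts S)) (hbdd : BddBelow (E.outCosts S))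
    (hx : x ∈ E.outCosts S) : a ≤ x :=
  (h S hS hS' ▸ ha).trans (csInf_le hbdd hx)

/-- An unbounded set of reals has `sInf = 0`, so balance forbids it opposite a negative
infimum. -/
theorem IsBalanced.bddBelow_inCosts (h : E.IsBalanced) (hS : S.Nonempty) (hS' : S ≠ Set.univ)
    {x : ℝ} (hbdd : BddBelow (E.outCosts S)) (hx : x ∈ E.outCosts S) (hx0 : x < 0) :
    BddBelow (E.inCosts S) := by
  by_contra hnb
  have := csInf_le hbdd hx
  rw [← h S hS hS', Real.sInf_of_not_bddBelow hnb] at this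
  linarith

end Balance

section FeasiblePotential

variable {E : MGraph V} {Φ : V → ℝ} {lam : ℝ}

def IsFeasible (E : MGraph V) (lam : ℝ) (Φ : V → ℝ) : Prop :=
  ∀ e, lam + Φ (E.src e) - Φ (E.tgt e) ≤ E.cost e

theorem lt_of_cost_lt (hΦ : E.IsFeasible lam Φ) {e : E.ι}
    (he : E.cost e < lam) : Φ (E.src e) < Φ (E.tgt e) := by
  linarith [hΦ e]

theorem le_of_mem_outCosts_levelSet (hΦ : E.IsFeasible lam Φ)
    {r x : ℝ} (hx : x ∈ E.outCosts {v | r < Φ v}) : lam ≤ x := by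
  obtain ⟨f, hs, ht, rfl⟩ := hx
  have hs : r < Φ (E.src f) := hs
  have ht : Φ (E.tgt f) ≤ r := not_lt.1 ht
  linarith [hΦ f]

theorem not_bddBelow_inCosts_levelSet (hbal : E.IsBalanced)
    (hΦ : E.IsFeasible lam Φ) {e : E.ι} (he : E.cost e < lam)
    (hwalk : ∃ p, E.IsWalk (E.tgt e) (E.src e) p) :
    ¬BddBelow (E.inCosts {v | Φ (E.src e) < Φ v}) ∧ lam ≤ 0 := by
  set S := {v | Φ (E.src e) < Φ v}
  have hsrc : E.src e ∉ S := lt_irrefl (Φ (E.src e))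
  have htgt : E.tgt e ∈ S := lt_of_cost_lt hΦ he
  have hS : S.Nonempty := ⟨_, htgt⟩
  have hS' : S ≠ Set.univ := (Set.ne_univ_iff_exists_notMem _).2 ⟨_, hsrc⟩
  have hout : lam ≤ sInf (E.outCosts S) := by
    obtain ⟨p, hp⟩ := hwalk
    obtain ⟨f, -, hf⟩ := hp.exists_leave htgt hsrc
    exact le_csInf ⟨_, f, hf.1, hf.2, rfl⟩ fun x hx => le_of_mem_outCosts_levelSet hΦ hx
  have hnb : ¬BddBelow (E.inCosts S) := fun hbdd =>
    (hbal.le_of_mem_inCosts hS hS' hout hbdd ⟨e, hsrc, htgt, rfl⟩).not_gt he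
  rw [← hbal S hS hS', Real.sInf_of_not_bddBelow hnb] at hout
  exact ⟨hnb, hout⟩

/-- Moving the endpoints of a cheap crossing edge `p` across the level set makes `p` a leaving
edge of negative cost, which forces the entering costs to be bounded. -/
theorem bddBelow_cost_crossing_of_ne (hbal : E.IsBalanced)
    (hΦ : E.IsFeasible lam Φ) (hlam : lam ≤ 0) {p : E.ι} {r : ℝ}
    (hp : E.cost p < lam) (hp₁ : Φ (E.src p) ≤ r) (hp₂ : r < Φ (E.tgt p)) :
    BddBelow (E.cost '' {f | Φ (E.src f) ≤ r ∧ r < Φ (E.tgt f) ∧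
      E.src f ≠ E.src p ∧ E.tgt f ≠ E.tgt p}) := by
  set S := ({v | r < Φ v} ∪ {E.src p}) \ {E.tgt p}
  have hne : E.src p ≠ E.tgt p := fun h => (lt_of_cost_lt hΦ hp).ne (congrArg Φ h)
  have hsrc : E.src p ∈ S := ⟨Or.inr rfl, hne⟩
  have htgt : E.tgt p ∉ S := fun h => h.2 rfl
  have hout : ∀ x ∈ E.outCosts S, lam + Φ (E.src p) - Φ (E.tgt p) ≤ x := by
    rintro x ⟨f, ⟨hfs, -⟩, hft, rfl⟩
    have h₁ : Φ (E.src p) ≤ Φ (E.src f) := by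
      rcases hfs with h | h
      · exact hp₁.trans (le_of_lt h)
      · rw [Set.mem_singleton_iff.1 h]
    have h₂ : Φ (E.tgt f) ≤ Φ (E.tgt p) := by
      by_cases h : E.tgt f = E.tgt p
      · rw [h]
      · have : ¬r < Φ (E.tgt f) := fun h' => hft ⟨Or.inl h', h⟩
        exact (not_lt.1 this).trans hp₂.le
    linarith [hΦ f]
  refine (hbal.bddBelow_inCosts ⟨_, hsrc⟩ ((Set.ne_univ_iff_exists_notMem _).2 ⟨_, htgt⟩)
    ⟨_, hout⟩ ⟨p, hsrc, htgt, rfl⟩ (hp.trans_le hlam)).mono ?_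
  rintro _ ⟨f, ⟨hf₁, hf₂, hfs, hft⟩, rfl⟩
  refine ⟨f, fun h => ?_, ⟨Or.inl hf₂, hft⟩, rfl⟩
  rcases h.1 with h | h
  · exact not_lt.2 hf₁ h
  · exact hfs h

theorem src_eq_or_tgt_eq_of_crossing (hbal : E.IsBalanced)
    (hΦ : E.IsFeasible lam Φ) (hlam : lam ≤ 0) {p q : E.ι}
    {r : ℝ} (hp : E.cost p < lam) (hq : E.cost q < lam) (hp₁ : Φ (E.src p) ≤ r)
    (hp₂ : r < Φ (E.tgt p)) (hq₁ : Φ (E.src q) ≤ r) (hq₂ : r < Φ (E.tgt q)) :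
    E.src p = E.src q ∨ E.tgt p = E.tgt q := by
  by_contra! h
  have hbdd : BddBelow (E.inCosts {v | r < Φ v}) := by
    refine (((bddBelow_cost_crossing_of_ne hbal hΦ hlam hp hp₁ hp₂).union
      (bddBelow_cost_crossing_of_ne hbal hΦ hlam hq hq₁ hq₂)).union
      ((bddBelow_Ici (a := lam + Φ (E.src p) - Φ (E.tgt q))).union
        (bddBelow_Ici (a := lam + Φ (E.src q) - Φ (E.tgt p))))).mono ?_
    rintro _ ⟨f, hfs, hft, rfl⟩
    have hf₁ : Φ (E.src f) ≤ r := not_lt.1 hfs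
    have hΦf := hΦ f
    by_cases hsp : E.src f = E.src p
    · by_cases htq : E.tgt f = E.tgt q
      · rw [hsp, htq] at hΦf
        exact Or.inr (Or.inl hΦf)
      · exact Or.inl (Or.inr ⟨f, ⟨hf₁, hft, hsp ▸ h.1, htq⟩, rfl⟩)
    · by_cases htp : E.tgt f = E.tgt p
      · by_cases hsq : E.src f = E.src q
        · rw [hsq, htp] at hΦf
          exact Or.inr (Or.inr hΦf)
        · exact Or.inl (Or.inr ⟨f, ⟨hf₁, hft, hsq, htp ▸ h.2⟩, rfl⟩)
      · exact Or.inl (Or.inl ⟨f, ⟨hf₁, hft, hsp, htp⟩, rfl⟩)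
  have hout : lam ≤ sInf (E.outCosts {v | r < Φ v}) :=
    Real.le_sInf (fun _ hx => le_of_mem_outCosts_levelSet hΦ hx) hlam
  exact (hbal.le_of_mem_inCosts (S := {v | r < Φ v}) ⟨_, hp₂⟩
    ((Set.ne_univ_iff_exists_notMem _).2 ⟨_, not_lt.2 hp₁⟩) hout hbdd
    ⟨p, not_lt.2 hp₁, hp₂, rfl⟩).not_gt hp

theorem tgt_eq_of_forall_exists_tgt_eq_cost_lt (hbal : E.IsBalanced)
    (hΦ : E.IsFeasible lam Φ) (hlam : lam ≤ 0) {t : V}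
    (hunb : ∀ M, ∃ g, E.tgt g = t ∧ E.cost g < M) {e : E.ι} (he : E.cost e < lam)
    (het : Φ (E.src e) < Φ t) : E.tgt e = t := by
  obtain ⟨g, hgt, hg⟩ := hunb (lam + Φ (E.src e) - Φ t)
  have hΦg := hΦ g
  rw [hgt] at hΦg
  have hgs : Φ (E.src g) < Φ (E.src e) := by linarith
  rcases src_eq_or_tgt_eq_of_crossing hbal hΦ hlam he (q := g) (by linarith) le_rfl
    (lt_of_cost_lt hΦ he) hgs.le (hgt ▸ het) with h | h
  · exact absurd (congrArg Φ h) hgs.ne'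
  · exact h.trans hgt

/-- The singleton cut at the source of one cheap edge into `t`: no cheap edge enters it, and
all cheap edges leaving it go to `t`. -/
theorem not_forall_exists_tgt_eq_cost_lt (hbal : E.IsBalanced)
    (hΦ : E.IsFeasible lam Φ) (hlam : lam ≤ 0) (t : V) :
    ¬∀ M, ∃ g, E.tgt g = t ∧ E.cost g < M := by
  intro hunb
  obtain ⟨g, hgt, hg⟩ := hunb lam
  set z := E.src g
  have hzt : Φ z < Φ t := hgt ▸ lt_of_cost_lt hΦ hg
  have hz : z ≠ t := fun h => hzt.ne (congrArg Φ h)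
  have hin : lam ≤ sInf (E.inCosts {z}) := by
    refine Real.le_sInf ?_ hlam
    rintro _ ⟨f, -, hfz, rfl⟩
    by_contra! hf
    have hfz : E.tgt f = z := hfz
    have hfs : Φ (E.src f) < Φ z := hfz ▸ lt_of_cost_lt hΦ hf
    exact hz (hfz.symm.trans
      (tgt_eq_of_forall_exists_tgt_eq_cost_lt hbal hΦ hlam hunb hf (hfs.trans hzt)))
  have hout : BddBelow (E.outCosts {z}) := by
    refine ⟨lam + Φ z - Φ t, ?_⟩
    rintro _ ⟨f, hfz, -, rfl⟩
    have hfz : E.src f = z := hfz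
    by_cases hf : E.cost f < lam
    · have hΦf := hΦ f
      rwa [hfz, tgt_eq_of_forall_exists_tgt_eq_cost_lt hbal hΦ hlam hunb hf (hfz ▸ hzt)]
        at hΦf
    · linarith
  have hg_out : E.cost g ∈ E.outCosts {z} := ⟨g, rfl, fun h => hz (hgt ▸ h).symm, rfl⟩
  exact (hbal.le_of_mem_outCosts (S := {z}) ⟨z, rfl⟩ ((Set.ne_univ_iff_exists_notMem _).2
    ⟨t, fun h => hz (Set.mem_singleton_iff.1 h).symm⟩) hin hout hg_out).not_gt hg

theorem not_forall_exists_src_eq_cost_lt (hbal : E.IsBalanced)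
    (hΦ : E.IsFeasible lam Φ) (hlam : lam ≤ 0) (s : V) :
    ¬∀ M, ∃ g, E.src g = s ∧ E.cost g < M :=
  not_forall_exists_tgt_eq_cost_lt (E := E.reverse) (Φ := fun v => -Φ v) hbal.reverse
    (fun e => by have := hΦ e; simp only [reverse]; linarith) hlam s

theorem le_cost_of_isBalanced (hbal : E.IsBalanced)
    (hΦ : E.IsFeasible lam Φ)
    (hcyc : ∀ e, ∃ p, E.IsWalk (E.tgt e) (E.src e) p) (e : E.ι) : lam ≤ E.cost e := by
  by_contra! he
  obtain ⟨hnb, hlam⟩ := not_bddBelow_inCosts_levelSet hbal hΦ he (hcyc e)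
  obtain ⟨M₁, hM₁⟩ := not_forall.1 (not_forall_exists_src_eq_cost_lt hbal hΦ hlam (E.src e))
  obtain ⟨M₂, hM₂⟩ := not_forall.1 (not_forall_exists_tgt_eq_cost_lt hbal hΦ hlam (E.tgt e))
  obtain ⟨_, ⟨f, hfs, hft, rfl⟩, hf⟩ := not_bddBelow_iff.1 hnb (min lam (min M₁ M₂))
  simp only [lt_min_iff] at hf
  rcases src_eq_or_tgt_eq_of_crossing hbal hΦ hlam he hf.1 le_rfl (lt_of_cost_lt hΦ he)
    (not_lt.1 hfs) hft with h | h
  · exact hM₁ ⟨f, h.symm, hf.2.1⟩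
  · exact hM₂ ⟨f, h.symm, hf.2.2⟩

end FeasiblePotential

section Contraction

variable {D : MGraph V} {q : V → V} {β : V → ℝ} {S : Set V}

theorem inCosts_contract_reweight (hS : ∀ w, q w ∈ S ↔ w ∈ S) :
    ((D.contract q).reweight β).inCosts S = (D.reweight (β ∘ q)).inCosts S := by
  ext x
  constructor
  · rintro ⟨e, hs, ht, rfl⟩
    exact ⟨e.1, fun h => hs ((hS _).2 h), (hS _).1 ht, rfl⟩
  · rintro ⟨e, hs, ht, rfl⟩
    have hs' : q (D.src e) ∉ S := fun h => hs ((hS _).1 h)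
    have ht' : q (D.tgt e) ∈ S := (hS _).2 ht
    exact ⟨⟨e, fun h => hs' (h ▸ ht')⟩, hs', ht', rfl⟩

theorem outCosts_contract_reweight (hS : ∀ w, q w ∈ S ↔ w ∈ S) :
    ((D.contract q).reweight β).outCosts S = (D.reweight (β ∘ q)).outCosts S := by
  rw [outCosts_eq_inCosts_compl, outCosts_eq_inCosts_compl,
    inCosts_contract_reweight fun w => not_congr (hS w)]

theorem le_cost_contract_reweight {lam : ℝ} (hsc : D.StronglyConnected)
    (hall : ∀ e, lam ≤ D.cost e) (hβ : (D.contract q).MinBalances β) (e : (D.contract q).ι) :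
    lam ≤ ((D.contract q).reweight β).cost e := by
  refine le_cost_of_isBalanced (Φ := β) (minBalances_iff_isBalanced.1 hβ)
    (fun f => ?_) (fun f => ?_) e
  · simp only [reweight, contract]
    linarith [hall f.1]
  · obtain ⟨p, hp⟩ := hsc (D.tgt f.1) (D.src f.1)
    obtain ⟨p', hp'⟩ := hp.contract q
    exact ⟨p', isWalk_reweight_iff.2 hp'⟩

theorem le_cost_reweight_comp {lam : ℝ} (hD : ∀ e, lam ≤ D.cost e)
    (hH : ∀ e, lam ≤ ((D.contract q).reweight β).cost e) (e : D.ι) :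
    lam ≤ (D.reweight (β ∘ q)).cost e := by
  by_cases h : q (D.src e) = q (D.tgt e)
  · show lam ≤ D.cost e + β (q (D.src e)) - β (q (D.tgt e))
    rw [h]
    linarith [hD e]
  · exact hH ⟨e, h⟩

theorem sInf_inCosts_eq_sInf_outCosts_of_closed {E : MGraph V} {lam : ℝ}
    (hlow : ∀ e, lam ≤ E.cost e) {C : List E.ι} {u : V} (hcyc : E.IsWalk u u C)
    (hC : ∀ e ∈ C, E.cost e = lam) {e : E.ι} (he : e ∈ C) (hS : ¬(E.src e ∈ S ↔ u ∈ S)) :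
    sInf (E.inCosts S) = sInf (E.outCosts S) := by
  obtain ⟨⟨f, hf, hfS⟩, ⟨g, hg, hgS⟩⟩ := hcyc.exists_enter_and_leave_of_closed he hS
  have hin : IsLeast (E.inCosts S) lam :=
    ⟨⟨f, hfS.1, hfS.2, (hC f hf).symm⟩, by rintro _ ⟨e, -, -, rfl⟩; exact hlow e⟩
  have hout : IsLeast (E.outCosts S) lam :=
    ⟨⟨g, hgS.1, hgS.2, (hC g hg).symm⟩, by rintro _ ⟨e, -, -, rfl⟩; exact hlow e⟩
  rw [hin.csInf_eq, hout.csInf_eq]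

theorem minBalances_comp_contract {lam : ℝ} (hsc : D.StronglyConnected) {C : List D.ι}
    {u₀ : V} (hcyc : D.IsWalk u₀ u₀ C) (hCmin : ∀ e ∈ C, D.cost e = lam)
    (hall : ∀ e, lam ≤ D.cost e) {VC : Set V} [DecidablePred (· ∈ VC)]
    (hVC : VC = {w | ∃ e ∈ C, D.src e = w}) (hq : ∀ w, q w = if w ∈ VC then u₀ else w)
    (hβ : (D.contract q).MinBalances β) : D.MinBalances (β ∘ q) := by
  have hqsrc : ∀ e ∈ C, q (D.src e) = u₀ := fun e he => by
    rw [hq, if_pos (hVC ▸ ⟨e, he, rfl⟩)]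
  have hH := le_cost_contract_reweight hsc hall hβ
  rw [minBalances_iff_isBalanced]
  intro S hS hS'
  by_cases hsat : ∀ e ∈ C, (D.src e ∈ S ↔ u₀ ∈ S)
  · have hqS : ∀ w, q w ∈ S ↔ w ∈ S := fun w => by
      rw [hq]
      split_ifs with hw
      · obtain ⟨e, he, rfl⟩ := hVC ▸ hw
        exact (hsat e he).symm
      · rfl
    rw [← inCosts_contract_reweight hqS, ← outCosts_contract_reweight hqS]
    exact hβ S hS hS'
  · obtain ⟨e, he, hne⟩ := not_forall₂.1 hsat
    refine sInf_inCosts_eq_sInf_outCosts_of_closed (le_cost_reweight_comp hall hH)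
      (isWalk_reweight_iff.2 hcyc) (fun f hf => ?_) he hne
    obtain ⟨g, hg, hgf⟩ := hcyc.exists_src_eq_tgt_of_closed hf
    show D.cost f + β (q (D.src f)) - β (q (D.tgt f)) = lam
    rw [hqsrc f hf, ← hgf, hqsrc g hg, hCmin f hf]
    ring

end Contraction

end MGraph

theorem stmt13_general {V : Type} (G : MGraph V) (π : V → ℝ) (lamstar : ℝ)
    (hsc : G.StronglyConnected)
    (C : List (G.reweight π).ι) (u₀ : V)
    (hcyc : (G.reweight π).IsWalk u₀ u₀ C)
    (hCmin : ∀ e ∈ C, (G.reweight π).cost e = lamstar)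
    (hall : ∀ e, lamstar ≤ (G.reweight π).cost e)
    (VC : Set V) [DecidablePred (· ∈ VC)]
    (hVC : VC = {w | ∃ e ∈ C, (G.reweight π).src e = w})
    (q : V → V) (hq : ∀ w, q w = if w ∈ VC then u₀ else w)
    (β : V → ℝ)
    (hβ : ((G.reweight π).contract q).MinBalances β) :
    (G.reweight π).MinBalances (fun w => if w ∈ VC then β u₀ else β w) ∧
    G.MinBalances (fun w => π w + if w ∈ VC then β u₀ else β w) := by
  have hα : (fun w => if w ∈ VC then β u₀ else β w) = β ∘ q := by
    funext w
    simp only [Function.comp_apply, hq, apply_ite β]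
  have h : (G.reweight π).MinBalances (fun w => if w ∈ VC then β u₀ else β w) :=
    hα ▸ MGraph.minBalances_comp_contract (hsc.reweight π) hcyc hCmin hall hVC hq hβ
  exact ⟨h, MGraph.minBalances_reweight_iff.1 h⟩

/-- Let `G` be strongly connected, `C` a cycle in `G^π` all of whose
edges have minimum cost `lam*` (all other edge costs being `≥ lam*`), let `H` be the
contraction of `G^π` along `C` (collapsing the vertex set `VC` of `C` to `u₀`), and
let `β` minimum-balance `H`. Then the potential `α` with `α w = β u₀` for `w` on `C`
and `α w = β w` otherwise minimum-balances `G^π`; hence `π + α` minimum-balances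
`G`. -/
theorem stmt13 {V : Type} (G : MGraph V) (π : V → ℝ) (lamstar : ℝ)
    (hsc : G.StronglyConnected)
    (C : List (G.reweight π).ι) (u₀ : V) (hC : C ≠ [])
    (hcyc : (G.reweight π).IsWalk u₀ u₀ C)
    (hCmin : ∀ e ∈ C, (G.reweight π).cost e = lamstar)
    (hall : ∀ e, lamstar ≤ (G.reweight π).cost e)
    (VC : Set V) [DecidablePred (· ∈ VC)]
    (hVC : VC = {w | ∃ e ∈ C, (G.reweight π).src e = w})
    (q : V → V) (hq : ∀ w, q w = if w ∈ VC then u₀ else w)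
    (β : V → ℝ)
    (hβ : ((G.reweight π).contract q).MinBalances β) :
    (G.reweight π).MinBalances (fun w => if w ∈ VC then β u₀ else β w) ∧
    G.MinBalances (fun w => π w + if w ∈ VC then β u₀ else β w) :=
  stmt13_general G π lamstar hsc C u₀ hcyc hCmin hall VC hVC q hq β hβ
end

section
/- For a uniformly random directed graph with n > 8 vertices and m < n(n−1)/4 edges (each of the n(n−1) possible edges equally likely, chosen without replacement), the number g_d of such graphs with a fixed vertex of degree exactly d satisfies g_d ≤ g_{d−1}·(4m)/(dn). -/
/-! Passing from degree `d` to `d + 1` moves one edge from the `B = n(n-1) - 2(n-1)` slots not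
incident to the fixed vertex to the `A = 2(n-1)` incident ones, so
`g_{d+1} / g_d = (A - d)(m - d) / ((d + 1)(B - m + d + 1))`. The numerator is at most `2(n-1) m`,
and `4m < n(n-1)` together with `n > 8` makes `B - m + d + 1` at least `n(n-1)/2`. -/

/-- `numGraphs n m d` : the number of directed graphs on `n` labelled vertices with
`m` edges (no self-loops) in which a fixed vertex has degree (in-degree plus
out-degree) exactly `d`. -/
def numGraphs (n m d : ℕ) : ℕ :=
  Nat.choose (2 * (n - 1)) d * Nat.choose (n * (n - 1) - 2 * (n - 1)) (m - d)

theorem Nat.choose_succ_mul_choose_mul_eq (A B d k : ℕ) :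
    A.choose (d + 1) * B.choose k * ((d + 1) * (B - k)) =
      A.choose d * B.choose (k + 1) * ((A - d) * (k + 1)) := by
  have hA := Nat.choose_succ_right_eq A d
  have hB := Nat.choose_succ_right_eq B k
  calc A.choose (d + 1) * B.choose k * ((d + 1) * (B - k))
      = (A.choose (d + 1) * (d + 1)) * (B.choose k * (B - k)) := by ring
    _ = (A.choose d * (A - d)) * (B.choose (k + 1) * (k + 1)) := by rw [hA, hB]
    _ = A.choose d * B.choose (k + 1) * ((A - d) * (k + 1)) := by ring

theorem numGraphs_succ_mul_eq (n m d : ℕ) (hdm : d < m) :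
    numGraphs n m (d + 1) * ((d + 1) * (n * (n - 1) - 2 * (n - 1) - (m - (d + 1)))) =
      numGraphs n m d * ((2 * (n - 1) - d) * (m - d)) := by
  have hk : m - d = m - (d + 1) + 1 := by omega
  rw [numGraphs, numGraphs, hk]
  exact Nat.choose_succ_mul_choose_mul_eq _ _ _ _

theorem mul_degree_ratio_le (n m d : ℕ) (hn : 8 < n) (hm : 4 * m < n * (n - 1)) :
    n * ((2 * (n - 1) - d) * (m - d)) ≤
      4 * m * (n * (n - 1) - 2 * (n - 1) - (m - (d + 1))) := by
  have h8 : 8 * (n - 1) ≤ n * (n - 1) := Nat.mul_le_mul_right _ hn.le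
  calc n * ((2 * (n - 1) - d) * (m - d))
      ≤ n * (2 * (n - 1) * m) := by gcongr <;> omega
    _ = 2 * (n * (n - 1)) * m := by ring
    _ ≤ 4 * (n * (n - 1) - 2 * (n - 1) - m) * m := Nat.mul_le_mul_right _ (by omega)
    _ ≤ 4 * m * (n * (n - 1) - 2 * (n - 1) - (m - (d + 1))) := by
        rw [mul_right_comm]; gcongr; omega

theorem numGraphs_succ_mul_le (n m d : ℕ) (hn : 8 < n) (hm : 4 * m < n * (n - 1))
    (hdm : d < m) :
    numGraphs n m (d + 1) * ((d + 1) * n) ≤ numGraphs n m d * (4 * m) := by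
  have h8 : 8 * (n - 1) ≤ n * (n - 1) := Nat.mul_le_mul_right _ hn.le
  have hpos : 0 < n * (n - 1) - 2 * (n - 1) - (m - (d + 1)) := by omega
  refine Nat.le_of_mul_le_mul_right ?_ hpos
  calc numGraphs n m (d + 1) * ((d + 1) * n) * (n * (n - 1) - 2 * (n - 1) - (m - (d + 1)))
      = numGraphs n m (d + 1) * ((d + 1) * (n * (n - 1) - 2 * (n - 1) - (m - (d + 1)))) * n := by
        ring
    _ = numGraphs n m d * (n * ((2 * (n - 1) - d) * (m - d))) := by
        rw [numGraphs_succ_mul_eq n m d hdm]; ring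
    _ ≤ numGraphs n m d * (4 * m * (n * (n - 1) - 2 * (n - 1) - (m - (d + 1)))) :=
        Nat.mul_le_mul_left _ (mul_degree_ratio_le n m d hn hm)
    _ = numGraphs n m d * (4 * m) * (n * (n - 1) - 2 * (n - 1) - (m - (d + 1))) := by ring

/-- For `n > 8` and `m < n(n-1)/4`, the count `g_d` of graphs in which
a fixed vertex has degree exactly `d` satisfies `g_d ≤ g_{d-1} · (4m)/(dn)`. -/
theorem stmt16 (n m d : ℕ) (hn : 8 < n) (hm : (m : ℝ) < n * (n - 1) / 4)
    (hd : 1 ≤ d) (hdm : d ≤ m) :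
    (numGraphs n m d : ℝ) ≤ (numGraphs n m (d - 1) : ℝ) * (4 * m) / (d * n) := by
  obtain ⟨e, rfl⟩ : ∃ e, d = e + 1 := ⟨d - 1, by omega⟩
  have hm' : 4 * m < n * (n - 1) := by
    have : (4 * m : ℝ) < n * ((n - 1 : ℕ) : ℝ) := by
      rw [Nat.cast_sub (by omega : 1 ≤ n)]; push_cast; linarith
    exact_mod_cast this
  have key := numGraphs_succ_mul_le n m e hn hm' hdm
  rw [Nat.add_sub_cancel, le_div_iff₀ (by positivity)]
  exact_mod_cast key
end

section
/- For a uniformly random directed graph with n vertices and m edges, the probability that some vertex has degree greater than 8m/n + 2·log₂ n is less than 2/n. -/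
attribute [local instance] Classical.propDecidable

/-- The set of all directed graphs (edge sets without self-loops) on vertex set
`Fin n` with exactly `m` edges. -/
noncomputable def randomGraphs (n m : ℕ) : Finset (Finset (Fin n × Fin n)) :=
  Finset.powersetCard m
    ((Finset.univ : Finset (Fin n × Fin n)).filter fun e => e.1 ≠ e.2)

/-- The degree (in-degree plus out-degree) of vertex `v` in the graph `s`. -/
noncomputable def vdegree {n : ℕ} (s : Finset (Fin n × Fin n)) (v : Fin n) : ℕ :=
  (s.filter fun e => e.1 = v ∨ e.2 = v).card

/-!
The degree of a vertex `v` in a uniform `m`-subset of the `n(n-1)` possible edges is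
hypergeometric: the graphs meeting the `K ≤ 2(n-1)` edges at `v` in exactly `d` edges number at
most `g_d = C(K, d) C(n(n-1) - K, m - d)`. For `n ≥ 8` and `4m ≤ n(n-1)` the ratio `g_{d+1} / g_d`
is at most `1/2` as soon as `d + 1 ≥ 8m/n`, so a geometric series shows that `v` has degree at
least `c` in at most a fraction `2 · 2^{-(c-a)}` of all graphs, where `a = ⌊8m/n⌋`. With `c` just
above `8m/n + 2 log₂ n` this fraction is below `2/n²`, and a union bound over the `n` vertices
gives `2/n`. When `n < 8` or `8m/n + 2 log₂ n ≥ 2(n-1)` no degree can exceed the threshold.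
-/

open Finset

/-- For `d ≤ m`, the number of `m`-subsets of a `(K + b)`-set meeting a fixed `K`-subset in
exactly `d` elements. -/
def splitChoose (K b m d : ℕ) : ℕ := K.choose d * b.choose (m - d)

theorem splitChoose_le_choose_add (K b m d : ℕ) (hd : d ≤ m) :
    splitChoose K b m d ≤ (K + b).choose m := by
  rw [Nat.add_choose_eq]
  exact single_le_sum (f := fun ij : ℕ × ℕ => K.choose ij.1 * b.choose ij.2)
    (fun _ _ => Nat.zero_le _) (a := (d, m - d)) (mem_antidiagonal.2 (Nat.add_sub_cancel' hd))

theorem splitChoose_succ_mul (K b m d : ℕ) (hd : d < m) :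
    splitChoose K b m (d + 1) * ((d + 1) * (b - (m - (d + 1)))) =
      splitChoose K b m d * ((K - d) * (m - d)) := by
  have hK := Nat.choose_succ_right_eq K d
  have hb := Nat.choose_succ_right_eq b (m - (d + 1))
  rw [show m - (d + 1) + 1 = m - d by omega] at hb
  simp only [splitChoose]
  calc K.choose (d + 1) * b.choose (m - (d + 1)) * ((d + 1) * (b - (m - (d + 1))))
      = K.choose (d + 1) * (d + 1) * (b.choose (m - (d + 1)) * (b - (m - (d + 1)))) := by ring
    _ = K.choose d * (K - d) * (b.choose (m - d) * (m - d)) := by rw [hK, hb]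
    _ = _ := by ring

theorem two_mul_splitChoose_succ_le {K b m d : ℕ} (hd : d < m)
    (h : 2 * ((K - d) * (m - d)) ≤ (d + 1) * (b - (m - (d + 1)))) :
    2 * splitChoose K b m (d + 1) ≤ splitChoose K b m d := by
  rcases Nat.eq_zero_or_pos ((d + 1) * (b - (m - (d + 1)))) with hq | hq
  · have hKd : K < d + 1 := by
      simp only [hq, Nat.le_zero, mul_eq_zero] at h
      omega
    simp [splitChoose, Nat.choose_eq_zero_of_lt hKd]
  · refine Nat.le_of_mul_le_mul_right ?_ hq
    calc 2 * splitChoose K b m (d + 1) * ((d + 1) * (b - (m - (d + 1))))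
        = splitChoose K b m d * (2 * ((K - d) * (m - d))) := by
          rw [mul_assoc, splitChoose_succ_mul K b m d hd]; ring
      _ ≤ _ := Nat.mul_le_mul_left _ h

section Decay

variable {f : ℕ → ℝ} {a m : ℕ}

theorem le_half_pow_mul_of_two_mul_succ_le (hf : ∀ d, a ≤ d → d < m → 2 * f (d + 1) ≤ f d) :
    ∀ j, a + j ≤ m → f (a + j) ≤ (1 / 2) ^ j * f a
  | 0, _ => by simp
  | j + 1, h => by
    have := hf (a + j) (by omega) (by omega)
    have := le_half_pow_mul_of_two_mul_succ_le hf j (by omega)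
    rw [← add_assoc, pow_succ]
    linarith

theorem sum_Ico_le_of_two_mul_succ_le (hf : ∀ d, a ≤ d → d < m → 2 * f (d + 1) ≤ f d)
    (ha : 0 ≤ f a) {c : ℕ} (hac : a ≤ c) :
    ∑ d ∈ Ico c (m + 1), f d ≤ 2 * (1 / 2) ^ (c - a) * f a := by
  rw [sum_Ico_eq_sum_range]
  calc ∑ j ∈ range (m + 1 - c), f (c + j)
      ≤ ∑ j ∈ range (m + 1 - c), (1 / 2) ^ (c - a) * f a * (1 / 2) ^ j := by
        refine sum_le_sum fun j hj => ?_
        have := le_half_pow_mul_of_two_mul_succ_le hf (c - a + j) (by have := mem_range.1 hj; omega)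
        rw [show a + (c - a + j) = c + j by omega, pow_add] at this
        linarith
    _ = (1 / 2) ^ (c - a) * f a * ∑ j ∈ range (m + 1 - c), (1 / 2 : ℝ) ^ j := by
        rw [mul_sum]
    _ ≤ (1 / 2) ^ (c - a) * f a * 2 := by gcongr; exact sum_geometric_two_le _
    _ = _ := by ring

end Decay

namespace Finset

variable {α : Type*} [DecidableEq α] (S : Finset α) (p : α → Prop) [DecidablePred p]

theorem card_powersetCard_filter_card_filter_eq_le (m d : ℕ) :
    #{t ∈ S.powersetCard m | #(t.filter p) = d} ≤
      splitChoose #(S.filter p) #(S.filter (¬ p ·)) m d := by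
  refine (card_le_card_of_injOn (fun t => (t.filter p, t.filter (¬ p ·)))
    (t := (S.filter p).powersetCard d ×ˢ (S.filter (¬ p ·)).powersetCard (m - d)) ?_ ?_).trans
    (by rw [card_product, card_powersetCard, card_powersetCard, splitChoose])
  · intro t ht
    rw [mem_coe, mem_filter, mem_powersetCard] at ht
    obtain ⟨⟨htS, rfl⟩, hd⟩ := ht
    rw [mem_coe, mem_product, mem_powersetCard, mem_powersetCard]
    dsimp only
    refine ⟨⟨filter_subset_filter _ htS, hd⟩, filter_subset_filter _ htS, ?_⟩
    have := t.card_filter_add_card_filter_not p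
    omega
  · intro t _ t' _ h
    simp only [Prod.mk.injEq] at h
    rw [← filter_union_filter_not_eq p t, ← filter_union_filter_not_eq p t', h.1, h.2]

theorem card_powersetCard_filter_le_card_filter_le_sum (m c : ℕ) :
    #{t ∈ S.powersetCard m | c ≤ #(t.filter p)} ≤
      ∑ d ∈ Ico c (m + 1), splitChoose #(S.filter p) #(S.filter (¬ p ·)) m d := by
  calc #{t ∈ S.powersetCard m | c ≤ #(t.filter p)}
      ≤ #((Ico c (m + 1)).biUnion fun d => {t ∈ S.powersetCard m | #(t.filter p) = d}) := by
        refine card_le_card fun t ht => ?_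
        simp only [mem_filter, mem_powersetCard] at ht
        have : #(t.filter p) ≤ m := ht.1.2 ▸ card_filter_le t p
        simp only [mem_biUnion, mem_Ico, mem_filter, mem_powersetCard]
        exact ⟨_, ⟨ht.2, by omega⟩, ht.1, rfl⟩
    _ ≤ _ := card_biUnion_le.trans
        (sum_le_sum fun d _ => card_powersetCard_filter_card_filter_eq_le S p m d)

theorem card_powersetCard_filter_le_card_filter_le_half_pow_mul_choose {m a c : ℕ}
    (hstep : ∀ d, a ≤ d → d < m →
      2 * ((#(S.filter p) - d) * (m - d)) ≤ (d + 1) * (#(S.filter (¬ p ·)) - (m - (d + 1))))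
    (ham : a ≤ m) (hac : a ≤ c) :
    (#{t ∈ S.powersetCard m | c ≤ #(t.filter p)} : ℝ) ≤ 2 * (1 / 2) ^ (c - a) * (#S).choose m := by
  set g := splitChoose #(S.filter p) #(S.filter (¬ p ·)) m
  have hg : (g a : ℝ) ≤ (#S).choose m := by
    rw [← card_filter_add_card_filter_not (s := S) p]
    exact_mod_cast splitChoose_le_choose_add _ _ _ _ ham
  calc (#{t ∈ S.powersetCard m | c ≤ #(t.filter p)} : ℝ)
      ≤ ∑ d ∈ Ico c (m + 1), (g d : ℝ) := by
        exact_mod_cast S.card_powersetCard_filter_le_card_filter_le_sum p m c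
    _ ≤ 2 * (1 / 2) ^ (c - a) * g a :=
        sum_Ico_le_of_two_mul_succ_le (fun d had hdm => by
          exact_mod_cast two_mul_splitChoose_succ_le hdm (hstep d had hdm)) (by positivity) hac
    _ ≤ _ := by gcongr

end Finset

theorem two_mul_sub_mul_sub_le {n m K b d : ℕ} (hn : 8 ≤ n) (hK : K ≤ 2 * (n - 1))
    (hKb : K + b = n * (n - 1)) (hm : 4 * m ≤ n * (n - 1)) (hd : 8 * m ≤ (d + 1) * n) :
    2 * ((K - d) * (m - d)) ≤ (d + 1) * (b - (m - (d + 1))) := by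
  obtain ⟨k, rfl⟩ : ∃ k, n = k + 1 := ⟨n - 1, by omega⟩
  simp only [Nat.add_sub_cancel] at hK hKb hm
  have hKk : K * (k + 5) ≤ 2 * k * (k + 5) := Nat.mul_le_mul_right _ hK
  have hbm : K * (k + 1) + 4 * m ≤ 4 * b := by nlinarith
  calc 2 * ((K - d) * (m - d)) ≤ 2 * (K * m) := by gcongr <;> omega
    _ ≤ (d + 1) * (b - m) := by
        refine Nat.le_of_mul_le_mul_right ?_ (by omega : 0 < k + 1)
        calc 2 * (K * m) * (k + 1) = 2 * m * (K * (k + 1)) := by ring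
          _ ≤ 2 * m * (4 * (b - m)) := Nat.mul_le_mul_left _ (by omega)
          _ = 8 * m * (b - m) := by ring
          _ ≤ (d + 1) * (k + 1) * (b - m) := by gcongr
          _ = _ := by ring
    _ ≤ _ := by gcongr; omega

theorem randomGraphs_eq_powersetCard_offDiag (n m : ℕ) :
    randomGraphs n m = (univ : Finset (Fin n)).offDiag.powersetCard m := by
  rw [randomGraphs]
  congr 1
  ext e
  simp

theorem card_offDiag_univ_fin (n : ℕ) : #(univ : Finset (Fin n)).offDiag = n * (n - 1) := by
  rw [offDiag_card, card_univ, Fintype.card_fin, Nat.mul_sub_one]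

theorem card_randomGraphs (n m : ℕ) : #(randomGraphs n m) = (n * (n - 1)).choose m := by
  rw [randomGraphs_eq_powersetCard_offDiag, card_powersetCard, card_offDiag_univ_fin]

theorem card_offDiag_filter_incident_le {n : ℕ} (v : Fin n) :
    #((univ : Finset (Fin n)).offDiag.filter fun e => e.1 = v ∨ e.2 = v) ≤ 2 * (n - 1) := by
  calc #((univ : Finset (Fin n)).offDiag.filter fun e => e.1 = v ∨ e.2 = v)
      ≤ #({v} ×ˢ univ.erase v ∪ univ.erase v ×ˢ {v}) := by
        refine card_le_card fun ⟨a, b⟩ he => ?_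
        simp only [mem_filter, mem_offDiag, mem_univ, true_and] at he
        obtain ⟨hab, rfl | rfl⟩ := he <;> simp [hab, hab.symm]
    _ ≤ 2 * (n - 1) := by
        refine (card_union_le _ _).trans ?_
        simp only [card_product, card_singleton, card_erase_of_mem (mem_univ v), card_univ,
          Fintype.card_fin]
        omega

theorem vdegree_le_of_mem_randomGraphs {n m : ℕ} {s : Finset (Fin n × Fin n)}
    (hs : s ∈ randomGraphs n m) (v : Fin n) : vdegree s v ≤ m :=
  (card_filter_le _ _).trans (mem_powersetCard.1 hs).2.le

theorem vdegree_le_two_mul_of_mem_randomGraphs {n m : ℕ} {s : Finset (Fin n × Fin n)}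
    (hs : s ∈ randomGraphs n m) (v : Fin n) : vdegree s v ≤ 2 * (n - 1) := by
  rw [randomGraphs_eq_powersetCard_offDiag, mem_powersetCard] at hs
  exact (card_le_card (filter_subset_filter _ hs.1)).trans (card_offDiag_filter_incident_le v)

theorem card_filter_le_vdegree_le_half_pow_mul_choose {n m a c : ℕ} (v : Fin n) (hn : 8 ≤ n)
    (hm : 4 * m ≤ n * (n - 1)) (ha : 8 * m ≤ (a + 1) * n) (ham : a ≤ m) (hac : a ≤ c) :
    (#{s ∈ randomGraphs n m | c ≤ vdegree s v} : ℝ) ≤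
      2 * (1 / 2) ^ (c - a) * (n * (n - 1)).choose m := by
  have hK := card_offDiag_filter_incident_le v
  have hKb := (card_filter_add_card_filter_not (s := (univ : Finset (Fin n)).offDiag)
    fun e => e.1 = v ∨ e.2 = v).trans (card_offDiag_univ_fin n)
  rw [randomGraphs_eq_powersetCard_offDiag, ← card_offDiag_univ_fin]
  exact univ.offDiag.card_powersetCard_filter_le_card_filter_le_half_pow_mul_choose _
    (fun d had _ => two_mul_sub_mul_sub_le hn hK hKb hm (ha.trans (by gcongr))) ham hac

theorem vdegree_le_of_lt_eight_or_le {n m : ℕ} {s : Finset (Fin n × Fin n)} (hn : 0 < n)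
    (hs : s ∈ randomGraphs n m) (v : Fin n)
    (hsmall : n < 8 ∨ 2 * ((n : ℝ) - 1) ≤ 8 * m / n + 2 * Real.logb 2 n) :
    (vdegree s v : ℝ) ≤ 8 * m / n + 2 * Real.logb 2 n := by
  have hn0 : (0 : ℝ) < n := by exact_mod_cast hn
  have hL : 0 ≤ Real.logb 2 n := Real.logb_nonneg one_lt_two (by exact_mod_cast hn)
  rcases hsmall with hn8 | hdeg
  · have hdeg : (vdegree s v : ℝ) ≤ m := by exact_mod_cast vdegree_le_of_mem_randomGraphs hs v
    have hm : (m : ℝ) ≤ 8 * m / n := by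
      rw [le_div_iff₀ hn0]
      have : (n : ℝ) ≤ 8 := by exact_mod_cast hn8.le
      nlinarith [(m.cast_nonneg : (0 : ℝ) ≤ m)]
    linarith
  · have : (vdegree s v : ℝ) ≤ ((2 * (n - 1) : ℕ) : ℝ) := by
      exact_mod_cast vdegree_le_two_mul_of_mem_randomGraphs hs v
    push_cast [Nat.cast_sub hn] at this
    linarith

theorem sq_lt_two_pow_of_two_mul_logb_lt {n k : ℕ} (hn : 0 < n) (h : 2 * Real.logb 2 n < k) :
    (n : ℝ) ^ 2 < 2 ^ k := by
  have hlog : Real.logb 2 ((n : ℝ) ^ 2) < k := by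
    rw [Real.logb_pow]
    push_cast
    exact h
  rwa [Real.logb_lt_iff_lt_rpow one_lt_two (by positivity), Real.rpow_natCast] at hlog

theorem card_filter_exists_lt_vdegree_lt {n m : ℕ} (hn : 8 ≤ n) (hm : 4 * m ≤ n * (n - 1)) :
    (#{s ∈ randomGraphs n m | ∃ v : Fin n,
        (8 * m / n + 2 * Real.logb 2 n : ℝ) < vdegree s v} : ℝ) <
      2 / n * #(randomGraphs n m) := by
  have hn0 : (0 : ℝ) < n := by exact_mod_cast (by omega : 0 < n)
  have hL : 0 ≤ Real.logb 2 n :=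
    Real.logb_nonneg one_lt_two (by exact_mod_cast (by omega : 1 ≤ n))
  have hθ : 0 ≤ (8 * m / n + 2 * Real.logb 2 n : ℝ) := by positivity
  set a := 8 * m / n
  set c := ⌊(8 * m / n + 2 * Real.logb 2 n : ℝ)⌋₊ + 1
  have ha : 8 * m ≤ (a + 1) * n :=
    (Nat.lt_div_mul_add (a := 8 * m) (b := n) (by omega)).le.trans_eq (by ring)
  have ham : a ≤ m := Nat.div_le_of_le_mul (Nat.mul_le_mul_right m hn)
  have haR : (a : ℝ) ≤ 8 * m / n := by exact_mod_cast Nat.cast_div_le (m := 8 * m) (n := n)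
  have hac : a ≤ c := (Nat.le_floor (by linarith)).trans (Nat.le_succ _)
  have hc : (8 * m / n + 2 * Real.logb 2 n : ℝ) < c := by
    simp only [c]
    push_cast
    exact Nat.lt_floor_add_one _
  have hpow : (1 / 2 : ℝ) ^ (c - a) * n ^ 2 < 1 := by
    have := sq_lt_two_pow_of_two_mul_logb_lt (n := n) (k := c - a) (by omega) <| by
      rw [Nat.cast_sub hac]
      linarith
    rwa [one_div_pow, div_mul_eq_mul_div, one_mul, div_lt_one (by positivity)]
  have hsub : {s ∈ randomGraphs n m | ∃ v : Fin n,
        (8 * m / n + 2 * Real.logb 2 n : ℝ) < vdegree s v} ⊆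
      univ.biUnion fun v => {s ∈ randomGraphs n m | c ≤ vdegree s v} := by
    intro s hs
    simp only [mem_filter, mem_biUnion, mem_univ, true_and] at hs ⊢
    obtain ⟨hs, v, hv⟩ := hs
    exact ⟨v, hs, (Nat.floor_lt hθ).2 hv⟩
  calc (#{s ∈ randomGraphs n m | ∃ v : Fin n,
        (8 * m / n + 2 * Real.logb 2 n : ℝ) < vdegree s v} : ℝ)
      ≤ ∑ v : Fin n, (#{s ∈ randomGraphs n m | c ≤ vdegree s v} : ℝ) := by
        exact_mod_cast (card_le_card hsub).trans card_biUnion_le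
    _ ≤ ∑ _v : Fin n, 2 * (1 / 2) ^ (c - a) * ((n * (n - 1)).choose m : ℝ) :=
        sum_le_sum fun v _ => card_filter_le_vdegree_le_half_pow_mul_choose v hn hm ha ham hac
    _ = 2 / n * ((1 / 2) ^ (c - a) * n ^ 2) * (n * (n - 1)).choose m := by
        rw [sum_const, card_univ, Fintype.card_fin, nsmul_eq_mul]
        field_simp
    _ < 2 / n * 1 * (n * (n - 1)).choose m := by
        have : 0 < (n * (n - 1)).choose m := Nat.choose_pos (by omega)
        gcongr
    _ = 2 / n * #(randomGraphs n m) := by rw [mul_one, card_randomGraphs]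

/-- For a uniformly random directed graph with `n` vertices and `m`
edges, the probability that some vertex has degree greater than `8m/n + 2·log₂ n`
is less than `2/n` — stated by counting: the number of such graphs is less than
`2/n` times the total number of graphs. -/
theorem stmt17 (n m : ℕ) (hn : 0 < n) (hm : m ≤ n * (n - 1)) :
    (((randomGraphs n m).filter fun s => ∃ v : Fin n,
        (8 * m / n + 2 * Real.logb 2 n : ℝ) < (vdegree s v : ℝ)).card : ℝ) <
      2 / n * ((randomGraphs n m).card : ℝ) := by
  by_cases hsmall : n < 8 ∨ 2 * ((n : ℝ) - 1) ≤ 8 * m / n + 2 * Real.logb 2 n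
  · rw [filter_false_of_mem fun s hs ⟨v, hv⟩ =>
      (vdegree_le_of_lt_eight_or_le hn hs v hsmall).not_gt hv, card_empty, Nat.cast_zero,
      card_randomGraphs]
    have := Nat.choose_pos hm
    positivity
  · push Not at hsmall
    refine card_filter_exists_lt_vdegree_lt hsmall.1 ?_
    have hL : 0 ≤ Real.logb 2 n := Real.logb_nonneg one_lt_two (by exact_mod_cast hn)
    have h8m : (8 * m : ℝ) < 2 * ((n : ℝ) - 1) * n := by
      rw [← div_lt_iff₀ (by exact_mod_cast hn)]
      linarith [hsmall.2]
    have : ((4 * m : ℕ) : ℝ) < (n * (n - 1) : ℕ) := by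
      push_cast [Nat.cast_sub hn]
      linarith
    exact_mod_cast this.le
end
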